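/- Let Π be a convex set of stochastic policies and ν a probability distribution on states with ν(s) > 0 for all s. Assume the policy space is rich in the sense that E_ν(Π) = 0, and that π ∈ Π is an exact local optimum of J_ν over Π, i.e., for all π' ∈ Π, lim_{α→0}(J_ν((1-α)π+απ') - J_ν(π))/α ≤ 0. Then v_π = v_*, the optimal value function. -/

import Mathlib

open Matrix Filter Topology

section MDPdefs

variable {S A : Type*}

/-- `P` is a transition kernel: nonnegative and each row sums to one. -/
def IsKernel [Fintype S] (P : S → A → S → ℝ) : Prop :=
  ∀ s a, (∀ s', 0 ≤ P s a s') ∧ ∑ s', P s a s' = 1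

/-- A stochastic policy: a probability distribution over actions in each state. -/
def IsPolicy [Fintype A] (π : S → A → ℝ) : Prop :=
  ∀ s, (∀ a, 0 ≤ π s a) ∧ ∑ a, π s a = 1

/-- A probability distribution over states. -/
def IsDist [Fintype S] (μ : S → ℝ) : Prop :=
  (∀ s, 0 ≤ μ s) ∧ ∑ s, μ s = 1

/-- The reward vector `r_π(s) = ∑_a π(a|s) r(s,a)`. -/
def rPol [Fintype A] (r : S → A → ℝ) (π : S → A → ℝ) : S → ℝ :=
  fun s => ∑ a, π s a * r s a

/-- The stochastic matrix `P_π(s,s') = ∑_a π(a|s) P(s'|s,a)`. -/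
def PPol [Fintype A] (P : S → A → S → ℝ) (π : S → A → ℝ) : Matrix S S ℝ :=
  Matrix.of fun s s' => ∑ a, π s a * P s a s'

/-- The Bellman operator `T_π v = r_π + γ P_π v`. -/
noncomputable def bellman [Fintype S] [Fintype A] (P : S → A → S → ℝ) (r : S → A → ℝ)
    (γ : ℝ) (π : S → A → ℝ) (v : S → ℝ) : S → ℝ :=
  rPol r π + γ • (PPol P π *ᵥ v)

/-- The optimal Bellman operator `(Tv)(s) = max_a [r(s,a) + γ ∑_{s'} P(s'|s,a) v(s')]`. -/
noncomputable def optBellman [Fintype S] [Fintype A] [Nonempty A] (P : S → A → S → ℝ)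
    (r : S → A → ℝ) (γ : ℝ) (v : S → ℝ) : S → ℝ :=
  fun s => Finset.univ.sup' Finset.univ_nonempty fun a => r s a + γ * ∑ s', P s a s' * v s'

/-- The value function of policy `π`, `v_π = (I - γ P_π)⁻¹ r_π`, the unique solution of
`v = r_π + γ P_π v` when `0 ≤ γ < 1`. -/
noncomputable def valueFn [Fintype S] [Fintype A] [DecidableEq S] (P : S → A → S → ℝ)
    (r : S → A → ℝ) (γ : ℝ) (π : S → A → ℝ) : S → ℝ :=
  ((1 : Matrix S S ℝ) - γ • PPol P π)⁻¹ *ᵥ rPol r π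

/-- The γ-weighted occupancy measure `d_{μ,π} = (1-γ) μ (I - γ P_π)⁻¹` (a row vector). -/
noncomputable def occ [Fintype S] [Fintype A] [DecidableEq S] (P : S → A → S → ℝ)
    (γ : ℝ) (μ : S → ℝ) (π : S → A → ℝ) : S → ℝ :=
  (1 - γ) • (μ ᵥ* ((1 : Matrix S S ℝ) - γ • PPol P π)⁻¹)

/-- The stochastic mixture `(1-α)π + απ'`. -/
def mix (α : ℝ) (π π' : S → A → ℝ) : S → A → ℝ :=
  fun s a => (1 - α) * π s a + α * π' s a

/-- The `ν`-greedy-complexity `E_ν(Π) = sup_{ρ∈Π} inf_{ρ'∈Π} d_{ν,ρ}·(T v_ρ - T_{ρ'} v_ρ)`. -/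
noncomputable def greedyCplx [Fintype S] [Fintype A] [Nonempty A] [DecidableEq S]
    (P : S → A → S → ℝ) (r : S → A → ℝ) (γ : ℝ) (ν : S → ℝ)
    (Pol : Set (S → A → ℝ)) : ℝ :=
  ⨆ ρ : Pol, ⨅ ρ' : Pol,
    occ P γ ν (ρ : S → A → ℝ) ⬝ᵥ
      (optBellman P r γ (valueFn P r γ (ρ : S → A → ℝ)) -
        bellman P r γ (ρ' : S → A → ℝ) (valueFn P r γ (ρ : S → A → ℝ)))

/-- `π` is an `ε`-local optimum of `J_ν` over `Pol`: for every `π' ∈ Pol`, the (one-sided)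
limit of `(ν·v_{(1-α)π+απ'} - ν·v_π)/α` as `α → 0⁺` exists and is at most `ε`. -/
def IsLocalOpt [Fintype S] [Fintype A] [DecidableEq S]
    (P : S → A → S → ℝ) (r : S → A → ℝ) (γ : ℝ) (ν : S → ℝ)
    (Pol : Set (S → A → ℝ)) (π : S → A → ℝ) (ε : ℝ) : Prop :=
  ∀ π' ∈ Pol, ∃ L ≤ ε,
    Tendsto (fun α : ℝ =>
        (ν ⬝ᵥ valueFn P r γ (mix α π π') - ν ⬝ᵥ valueFn P r γ π) / α)
      (𝓝[>] 0) (𝓝 L)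

end MDPdefs

/-! Local optimality along the segment from `π` towards `π' ∈ Π` makes the directional derivative
of `J_ν`, which is `(1-γ)⁻¹ d_{ν,π} · (T_{π'} v_π - v_π)`, nonpositive. Richness provides, for
every `ε > 0`, some `π' ∈ Π` with `d_{ν,π} · (T v_π - T_{π'} v_π) < ε`; adding the two gives
`d_{ν,π} · (T v_π - v_π) ≤ 0`. Since `T v_π ≥ v_π` and `d_{ν,π} ≥ (1-γ) ν > 0`, `v_π` is a fixed
point of the `γ`-contraction `T`, hence `v_π = v_*`. Everything rests on `(I - γ Q)⁻¹` being
monotone, with `(I - γ Q)⁻¹ x ≥ x` for `x ≥ 0`, whenever `Q` is row-stochastic. -/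

open Finset

section WeightedSum

variable {ι : Type*} [Fintype ι] {w f : ι → ℝ} {c : ℝ}

theorem sum_mul_le_of_forall_le (hw0 : ∀ i, 0 ≤ w i) (hw1 : ∑ i, w i = 1)
    (hf : ∀ i, f i ≤ c) : ∑ i, w i * f i ≤ c :=
  calc ∑ i, w i * f i ≤ ∑ i, w i * c := sum_le_sum fun i _ => by gcongr; exacts [hw0 i, hf i]
    _ = c := by rw [← sum_mul, hw1, one_mul]

theorem le_sum_mul_of_forall_le (hw0 : ∀ i, 0 ≤ w i) (hw1 : ∑ i, w i = 1)
    (hf : ∀ i, c ≤ f i) : c ≤ ∑ i, w i * f i := by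
  have := sum_mul_le_of_forall_le (f := fun i => -f i) hw0 hw1 fun i => neg_le_neg (hf i)
  simp only [mul_neg, sum_neg_distrib] at this
  linarith

theorem abs_sum_mul_le_of_forall_abs_le (hw0 : ∀ i, 0 ≤ w i) (hw1 : ∑ i, w i = 1)
    (hf : ∀ i, |f i| ≤ c) : |∑ i, w i * f i| ≤ c :=
  abs_le.2 ⟨le_sum_mul_of_forall_le hw0 hw1 fun i => (abs_le.1 (hf i)).1,
    sum_mul_le_of_forall_le hw0 hw1 fun i => (abs_le.1 (hf i)).2⟩

end WeightedSum

namespace Matrix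

variable {n : Type*} [Fintype n] [DecidableEq n] {Q : Matrix n n ℝ} {γ : ℝ}

theorem norm_mulVec_le_of_mem_rowStochastic (hQ : Q ∈ rowStochastic ℝ n) (v : n → ℝ) :
    ‖Q *ᵥ v‖ ≤ ‖v‖ :=
  (pi_norm_le_iff_of_nonneg (norm_nonneg v)).2 fun i =>
    abs_sum_mul_le_of_forall_abs_le (fun _ => nonneg_of_mem_rowStochastic hQ)
      (sum_row_of_mem_rowStochastic hQ i) fun j => norm_le_pi_norm v j

theorem le_mulVec_of_mem_rowStochastic (hQ : Q ∈ rowStochastic ℝ n) {v : n → ℝ} {c : ℝ}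
    (hv : ∀ j, c ≤ v j) (i : n) : c ≤ (Q *ᵥ v) i :=
  le_sum_mul_of_forall_le (fun _ => nonneg_of_mem_rowStochastic hQ)
    (sum_row_of_mem_rowStochastic hQ i) hv

variable (hQ : Q ∈ rowStochastic ℝ n) (hγ0 : 0 ≤ γ) (hγ1 : γ < 1)
include hQ hγ0 hγ1

theorem isUnit_det_one_sub_smul : IsUnit (1 - γ • Q).det := by
  rw [isUnit_iff_ne_zero]
  intro hdet
  obtain ⟨v, hv0, hv⟩ := exists_mulVec_eq_zero_iff.2 hdet
  have hfix : v = γ • (Q *ᵥ v) := by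
    rwa [sub_mulVec, one_mulVec, smul_mulVec, sub_eq_zero] at hv
  have hcontr : ‖v‖ ≤ γ * ‖v‖ :=
    calc ‖v‖ = γ * ‖Q *ᵥ v‖ := by
          conv_lhs => rw [hfix]
          rw [norm_smul, Real.norm_of_nonneg hγ0]
      _ ≤ γ * ‖v‖ := by gcongr; exact norm_mulVec_le_of_mem_rowStochastic hQ v
  exact hv0 (norm_le_zero_iff.1 (by nlinarith [norm_nonneg v]))

theorem inv_one_sub_smul_mulVec (x : n → ℝ) :
    (1 - γ • Q)⁻¹ *ᵥ x = x + γ • (Q *ᵥ ((1 - γ • Q)⁻¹ *ᵥ x)) := by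
  have h : (1 - γ • Q) *ᵥ ((1 - γ • Q)⁻¹ *ᵥ x) = x := by
    rw [mulVec_mulVec, mul_nonsing_inv _ (isUnit_det_one_sub_smul hQ hγ0 hγ1), one_mulVec]
  rw [sub_mulVec, one_mulVec, smul_mulVec] at h
  exact eq_add_of_sub_eq h

theorem inv_one_sub_smul_mulVec_mulVec (x : n → ℝ) :
    (1 - γ • Q)⁻¹ *ᵥ ((1 - γ • Q) *ᵥ x) = x := by
  rw [mulVec_mulVec, nonsing_inv_mul _ (isUnit_det_one_sub_smul hQ hγ0 hγ1), one_mulVec]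

/-- The minimum `m` of `y = (1 - γQ)⁻¹ x` satisfies `m ≥ x + γ m`, since averaging by `Q`
cannot go below `m`. -/
theorem inv_one_sub_smul_mulVec_nonneg {x : n → ℝ} (hx : 0 ≤ x) :
    0 ≤ (1 - γ • Q)⁻¹ *ᵥ x := by
  set y := (1 - γ • Q)⁻¹ *ᵥ x
  intro i
  obtain ⟨j, -, hj⟩ := exists_min_image univ y ⟨i, mem_univ i⟩
  have hQy : y j ≤ (Q *ᵥ y) j := le_mulVec_of_mem_rowStochastic hQ (fun k => hj k (mem_univ k)) j
  have hyj : y j = x j + γ * (Q *ᵥ y) j := congrFun (inv_one_sub_smul_mulVec hQ hγ0 hγ1 x) j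
  have hxj : 0 ≤ x j := hx j
  have : 0 ≤ (1 - γ) * y j := by nlinarith [mul_le_mul_of_nonneg_left hQy hγ0]
  exact ((mul_nonneg_iff_of_pos_left (sub_pos.2 hγ1)).1 this).trans (hj i (mem_univ i))

theorem inv_one_sub_smul_mulVec_mono {x y : n → ℝ} (hxy : x ≤ y) :
    (1 - γ • Q)⁻¹ *ᵥ x ≤ (1 - γ • Q)⁻¹ *ᵥ y := by
  rw [← sub_nonneg, ← mulVec_sub]
  exact inv_one_sub_smul_mulVec_nonneg hQ hγ0 hγ1 (sub_nonneg.2 hxy)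

theorem le_inv_one_sub_smul_mulVec {x : n → ℝ} (hx : 0 ≤ x) : x ≤ (1 - γ • Q)⁻¹ *ᵥ x := by
  rw [inv_one_sub_smul_mulVec hQ hγ0 hγ1 x]
  refine le_add_of_nonneg_right (smul_nonneg hγ0 ?_)
  exact nonneg_mulVec_of_mem_rowStochastic hQ (inv_one_sub_smul_mulVec_nonneg hQ hγ0 hγ1 hx)

theorem inv_one_sub_smul_mulVec_const (c : ℝ) :
    (1 - γ • Q)⁻¹ *ᵥ (c • 1) = (c / (1 - γ)) • 1 := by
  have hγ : 1 - γ ≠ 0 := by linarith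
  have h : (1 - γ • Q) *ᵥ ((c / (1 - γ)) • 1) = c • 1 := by
    rw [sub_mulVec, one_mulVec, smul_mulVec, mulVec_smul, one_vecMul_of_mem_rowStochastic hQ,
      smul_smul, ← sub_smul]
    congr 1
    field_simp
  rw [← h, inv_one_sub_smul_mulVec_mulVec hQ hγ0 hγ1]

end Matrix

theorem mix_zero {S A : Type*} (π π' : S → A → ℝ) : mix 0 π π' = π := by
  funext s a
  simp [mix]

theorem IsPolicy.mix {S A : Type*} [Fintype A] {π π' : S → A → ℝ} (hπ : IsPolicy π)
    (hπ' : IsPolicy π') {α : ℝ} (hα0 : 0 ≤ α) (hα1 : α ≤ 1) : IsPolicy (mix α π π') := by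
  intro s
  refine ⟨fun a => add_nonneg (mul_nonneg (by linarith) ((hπ s).1 a))
    (mul_nonneg hα0 ((hπ' s).1 a)), ?_⟩
  simp only [_root_.mix, sum_add_distrib, ← mul_sum, (hπ s).2, (hπ' s).2]
  ring

section MDP

variable {S A : Type*} [Fintype S] [Fintype A] {P : S → A → S → ℝ} {r : S → A → ℝ} {γ : ℝ}
  {ρ π π' : S → A → ℝ}

theorem PPol_mem_rowStochastic [DecidableEq S] (hP : IsKernel P) (hρ : IsPolicy ρ) :
    PPol P ρ ∈ Matrix.rowStochastic ℝ S := by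
  refine Matrix.mem_rowStochastic_iff_sum.2
    ⟨fun s s' => sum_nonneg fun a _ => mul_nonneg ((hρ s).1 a) ((hP s a).1 s'), fun s => ?_⟩
  simp only [PPol, Matrix.of_apply]
  rw [sum_comm]
  simp only [← mul_sum, (hP _ _).2, mul_one, (hρ s).2]

variable (P r γ) in
def actionValue (v : S → ℝ) (s : S) (a : A) : ℝ :=
  r s a + γ * ∑ s', P s a s' * v s'

theorem bellman_apply (v : S → ℝ) (s : S) :
    bellman P r γ ρ v s = ∑ a, ρ s a * actionValue P r γ v s a := by
  simp only [bellman, rPol, PPol, actionValue, Pi.add_apply, Pi.smul_apply, smul_eq_mul,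
    Matrix.mulVec, dotProduct, Matrix.of_apply, mul_add, sum_add_distrib, mul_sum, sum_mul]
  rw [sum_comm (γ := A)]
  congr 1
  exact sum_congr rfl fun _ _ => sum_congr rfl fun _ _ => by ring

theorem bellman_mix (α : ℝ) (v : S → ℝ) :
    bellman P r γ (mix α π π') v = (1 - α) • bellman P r γ π v + α • bellman P r γ π' v := by
  funext s
  simp only [bellman_apply, mix, Pi.add_apply, Pi.smul_apply, smul_eq_mul, add_mul,
    sum_add_distrib, mul_sum, mul_assoc]

theorem abs_actionValue_le (hP : IsKernel P) (hγ0 : 0 ≤ γ) (v : S → ℝ) (s : S) (a : A) :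
    |actionValue P r γ v s a| ≤ ‖r‖ + γ * ‖v‖ := by
  have hr : |r s a| ≤ ‖r‖ := (norm_le_pi_norm (r s) a).trans (norm_le_pi_norm r s)
  have hPv : |∑ s', P s a s' * v s'| ≤ ‖v‖ :=
    abs_sum_mul_le_of_forall_abs_le (hP s a).1 (hP s a).2 fun s' => norm_le_pi_norm v s'
  calc |actionValue P r γ v s a| ≤ |r s a| + γ * |∑ s', P s a s' * v s'| := by
        refine (abs_add_le _ _).trans_eq ?_
        rw [abs_mul, abs_of_nonneg hγ0]
    _ ≤ ‖r‖ + γ * ‖v‖ := by gcongr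

theorem abs_bellman_le (hP : IsKernel P) (hγ0 : 0 ≤ γ) (hρ : IsPolicy ρ) (v : S → ℝ) (s : S) :
    |bellman P r γ ρ v s| ≤ ‖r‖ + γ * ‖v‖ := by
  rw [bellman_apply]
  exact abs_sum_mul_le_of_forall_abs_le (hρ s).1 (hρ s).2 (abs_actionValue_le hP hγ0 v s)

section Optimal

variable [Nonempty A]

theorem actionValue_le_optBellman (v : S → ℝ) (s : S) (a : A) :
    actionValue P r γ v s a ≤ optBellman P r γ v s :=
  le_sup' (actionValue P r γ v s) (mem_univ a)

theorem bellman_le_optBellman (hρ : IsPolicy ρ) (v : S → ℝ) :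
    bellman P r γ ρ v ≤ optBellman P r γ v := fun s => by
  rw [bellman_apply]
  exact sum_mul_le_of_forall_le (hρ s).1 (hρ s).2 (actionValue_le_optBellman v s)

theorem optBellman_le (hP : IsKernel P) (hγ0 : 0 ≤ γ) (v : S → ℝ) (s : S) :
    optBellman P r γ v s ≤ ‖r‖ + γ * ‖v‖ :=
  sup'_le _ _ fun a _ => (le_abs_self _).trans (abs_actionValue_le hP hγ0 v s a)

theorem optBellman_le_add_dist (hP : IsKernel P) (hγ0 : 0 ≤ γ) (v w : S → ℝ) (s : S) :
    optBellman P r γ v s ≤ optBellman P r γ w s + γ * dist v w := by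
  refine sup'_le _ _ fun a _ => ?_
  have hPvw : ∑ s', P s a s' * (v s' - w s') ≤ dist v w :=
    sum_mul_le_of_forall_le (hP s a).1 (hP s a).2 fun s' =>
      (le_abs_self _).trans (dist_le_pi_dist v w s')
  have hsplit : actionValue P r γ v s a
      = actionValue P r γ w s a + γ * ∑ s', P s a s' * (v s' - w s') := by
    simp only [actionValue, mul_sub, sum_sub_distrib]; ring
  change actionValue P r γ v s a ≤ _
  rw [hsplit]
  gcongr
  exact actionValue_le_optBellman w s a

theorem contractingWith_optBellman (hP : IsKernel P) (hγ0 : 0 ≤ γ) (hγ1 : γ < 1) :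
    ContractingWith γ.toNNReal (optBellman P r γ) := by
  refine ⟨Real.toNNReal_lt_one.2 hγ1, LipschitzWith.of_dist_le_mul fun v w => ?_⟩
  rw [Real.coe_toNNReal _ hγ0]
  refine (dist_pi_le_iff (by positivity)).2 fun s => abs_sub_le_iff.2 ⟨?_, ?_⟩
  · linarith [optBellman_le_add_dist (r := r) hP hγ0 v w s]
  · have h := optBellman_le_add_dist (r := r) hP hγ0 w v s
    rw [dist_comm] at h
    linarith

/-- Split `T u - u = (T u - T_ρ' u) + (T_ρ' u - u)` with `ρ'` nearly attaining the infimum. -/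
theorem dotProduct_optBellman_sub_nonpos {Pol : Set (S → A → ℝ)} {d u : S → ℝ}
    (hne : Pol.Nonempty)
    (hinf : ⨅ ρ' : Pol, d ⬝ᵥ (optBellman P r γ u - bellman P r γ ρ' u) ≤ 0)
    (hgrad : ∀ ρ' ∈ Pol, d ⬝ᵥ (bellman P r γ ρ' u - u) ≤ 0) :
    d ⬝ᵥ (optBellman P r γ u - u) ≤ 0 := by
  have := hne.to_subtype
  by_contra! hpos
  obtain ⟨ρ', hρ'⟩ := exists_lt_of_ciInf_lt (hinf.trans_lt hpos)
  have hsplit : d ⬝ᵥ (optBellman P r γ u - u) = d ⬝ᵥ (optBellman P r γ u - bellman P r γ ρ' u)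
      + d ⬝ᵥ (bellman P r γ ρ' u - u) := by
    rw [← dotProduct_add, sub_add_sub_cancel]
  linarith [hgrad ρ' ρ'.2]

end Optimal

end MDP

section Value

variable {S A : Type*} [Fintype S] [Fintype A] [DecidableEq S] {P : S → A → S → ℝ}
  {r : S → A → ℝ} {γ : ℝ} {ρ : S → A → ℝ}

theorem occ_dotProduct (μ x : S → ℝ) :
    occ P γ μ ρ ⬝ᵥ x = (1 - γ) * (μ ⬝ᵥ ((1 - γ • PPol P ρ)⁻¹ *ᵥ x)) := by
  rw [occ, smul_dotProduct, ← dotProduct_mulVec, smul_eq_mul]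

variable (hP : IsKernel P) (hρ : IsPolicy ρ) (hγ0 : 0 ≤ γ) (hγ1 : γ < 1)
include hP hρ hγ0 hγ1

theorem bellman_valueFn : bellman P r γ ρ (valueFn P r γ ρ) = valueFn P r γ ρ :=
  (Matrix.inv_one_sub_smul_mulVec (PPol_mem_rowStochastic hP hρ) hγ0 hγ1 _).symm

theorem valueFn_sub (u : S → ℝ) :
    valueFn P r γ ρ - u = (1 - γ • PPol P ρ)⁻¹ *ᵥ (bellman P r γ ρ u - u) := by
  have h : bellman P r γ ρ u - u = rPol r ρ - (1 - γ • PPol P ρ) *ᵥ u := by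
    rw [bellman, sub_mulVec, one_mulVec, smul_mulVec]
    abel
  rw [h, mulVec_sub,
    Matrix.inv_one_sub_smul_mulVec_mulVec (PPol_mem_rowStochastic hP hρ) hγ0 hγ1, valueFn]

theorem norm_valueFn_le : ‖valueFn P r γ ρ‖ ≤ ‖r‖ / (1 - γ) := by
  have h : ‖valueFn P r γ ρ‖ ≤ ‖r‖ + γ * ‖valueFn P r γ ρ‖ := by
    refine (pi_norm_le_iff_of_nonneg (by positivity)).2 fun s => ?_
    have h := abs_bellman_le (r := r) hP hγ0 hρ (valueFn P r γ ρ) s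
    rwa [bellman_valueFn hP hρ hγ0 hγ1] at h
  rw [le_div_iff₀ (by linarith)]
  linarith

variable {μ x : S → ℝ} (hμ : 0 ≤ μ)
include hμ

theorem occ_dotProduct_nonneg (hx : 0 ≤ x) : 0 ≤ occ P γ μ ρ ⬝ᵥ x := by
  rw [occ_dotProduct]
  exact mul_nonneg (by linarith) (dotProduct_nonneg_of_nonneg hμ
    (Matrix.inv_one_sub_smul_mulVec_nonneg (PPol_mem_rowStochastic hP hρ) hγ0 hγ1 hx))

theorem occ_dotProduct_le {c : ℝ} (hx : ∀ s, x s ≤ c) :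
    occ P γ μ ρ ⬝ᵥ x ≤ c * ∑ s, μ s := by
  have hQ := PPol_mem_rowStochastic hP hρ
  have hxc : x ≤ c • 1 := fun s => by simpa using hx s
  have h := dotProduct_le_dotProduct_of_nonneg_left
    (Matrix.inv_one_sub_smul_mulVec_mono hQ hγ0 hγ1 hxc) hμ
  rw [Matrix.inv_one_sub_smul_mulVec_const hQ hγ0 hγ1, dotProduct_smul, dotProduct_one,
    smul_eq_mul] at h
  rw [occ_dotProduct]
  calc (1 - γ) * (μ ⬝ᵥ ((1 - γ • PPol P ρ)⁻¹ *ᵥ x))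
      ≤ (1 - γ) * (c / (1 - γ) * ∑ s, μ s) := by gcongr
    _ = c * ∑ s, μ s := by field_simp [show 1 - γ ≠ 0 by linarith]

end Value

section Derivative

variable {S A : Type*} [Fintype S] [Fintype A] [DecidableEq S] {P : S → A → S → ℝ}
  {r : S → A → ℝ} {γ : ℝ} (hP : IsKernel P) (hγ0 : 0 ≤ γ) (hγ1 : γ < 1)
include hP hγ0 hγ1

theorem eq_zero_of_occ_dotProduct_nonpos {ρ : S → A → ℝ} (hρ : IsPolicy ρ) {μ x : S → ℝ}
    (hμ : ∀ s, 0 < μ s) (hx : 0 ≤ x) (h : occ P γ μ ρ ⬝ᵥ x ≤ 0) : x = 0 := by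
  have hμx : μ ⬝ᵥ x ≤ 0 := by
    have hle := dotProduct_le_dotProduct_of_nonneg_left
      (Matrix.le_inv_one_sub_smul_mulVec (PPol_mem_rowStochastic hP hρ) hγ0 hγ1 hx)
      (fun s => (hμ s).le)
    rw [occ_dotProduct] at h
    nlinarith
  have hterms := (sum_eq_zero_iff_of_nonneg fun s _ => mul_nonneg (hμ s).le (hx s)).1
    (le_antisymm hμx (dotProduct_nonneg_of_nonneg (fun s => (hμ s).le) hx))
  funext s
  exact (mul_eq_zero.1 (hterms s (mem_univ s))).resolve_left (hμ s).ne'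

/-- For `α > 0`, `T_{ρ_α} v_π - v_π = α (T_{π'} v_π - v_π)` and the performance difference
turn the difference quotient into `ν (I - γ P_{ρ_α})⁻¹ (T_{π'} v_π - v_π)`, which is continuous
in `α`. -/
theorem tendsto_slope_dotProduct_valueFn_mix {π π' : S → A → ℝ} (hπ : IsPolicy π)
    (hπ' : IsPolicy π') (ν : S → ℝ) :
    Tendsto (fun α : ℝ => (ν ⬝ᵥ valueFn P r γ (mix α π π') - ν ⬝ᵥ valueFn P r γ π) / α)
      (𝓝[>] 0)
      (𝓝 (ν ⬝ᵥ ((1 - γ • PPol P π)⁻¹ *ᵥ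
        (bellman P r γ π' (valueFn P r γ π) - valueFn P r γ π)))) := by
  set w := bellman P r γ π' (valueFn P r γ π) - valueFn P r γ π
  have hM : Continuous fun α : ℝ => (1 : Matrix S S ℝ) - γ • PPol P (mix α π π') := by
    unfold PPol mix
    fun_prop
  have hdet : ((1 : Matrix S S ℝ) - γ • PPol P π).det ≠ 0 :=
    (Matrix.isUnit_det_one_sub_smul (PPol_mem_rowStochastic hP hπ) hγ0 hγ1).ne_zero
  have hinv : ContinuousAt (fun α : ℝ => ((1 : Matrix S S ℝ) - γ • PPol P (mix α π π'))⁻¹) 0 := by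
    refine ContinuousAt.comp (f := fun α : ℝ => (1 : Matrix S S ℝ) - γ • PPol P (mix α π π'))
      ?_ hM.continuousAt
    rw [mix_zero]
    exact continuousAt_matrix_inv _ (by rw [Ring.inverse_eq_inv']; exact continuousAt_inv₀ hdet)
  have hlim : Tendsto (fun α : ℝ => ν ⬝ᵥ ((1 - γ • PPol P (mix α π π'))⁻¹ *ᵥ w)) (𝓝[>] 0)
      (𝓝 (ν ⬝ᵥ ((1 - γ • PPol P π)⁻¹ *ᵥ w))) := by
    have hdot : Continuous fun M : Matrix S S ℝ => ν ⬝ᵥ (M *ᵥ w) := by fun_prop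
    have h := (hdot.continuousAt.comp hinv).tendsto.mono_left
      (nhdsWithin_le_nhds (s := Set.Ioi 0))
    simpa only [Function.comp_def, mix_zero] using h
  refine hlim.congr' (eventuallyEq_of_mem (Ioo_mem_nhdsGT one_pos) fun α hα => ?_)
  have hstep : bellman P r γ (mix α π π') (valueFn P r γ π) - valueFn P r γ π = α • w := by
    rw [bellman_mix, bellman_valueFn hP hπ hγ0 hγ1]
    module
  rw [← dotProduct_sub, valueFn_sub hP (hπ.mix hπ' hα.1.le hα.2.le) hγ0 hγ1, hstep,
    mulVec_smul, dotProduct_smul, smul_eq_mul, mul_div_cancel_left₀ _ hα.1.ne']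

end Derivative

section Greedy

variable {S A : Type*} [Fintype S] [Fintype A] [Nonempty A] [DecidableEq S]
  {P : S → A → S → ℝ} {r : S → A → ℝ} {γ : ℝ} {Pol : Set (S → A → ℝ)}

theorem optBellman_sub_bellman_valueFn_le (hP : IsKernel P) (hγ0 : 0 ≤ γ) (hγ1 : γ < 1)
    {ρ : S → A → ℝ} (hρ : IsPolicy ρ) (s : S) :
    (optBellman P r γ (valueFn P r γ ρ) - bellman P r γ ρ (valueFn P r γ ρ)) s
      ≤ ‖r‖ + 2 * (‖r‖ / (1 - γ)) := by
  have hv := norm_valueFn_le (r := r) hP hρ hγ0 hγ1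
  have hT := optBellman_le (r := r) hP hγ0 (valueFn P r γ ρ) s
  have hvs : -valueFn P r γ ρ s ≤ ‖valueFn P r γ ρ‖ :=
    (neg_le_abs _).trans (norm_le_pi_norm (valueFn P r γ ρ) s)
  have hγv : γ * ‖valueFn P r γ ρ‖ ≤ ‖valueFn P r γ ρ‖ :=
    mul_le_of_le_one_left (norm_nonneg _) hγ1.le
  rw [bellman_valueFn hP hρ hγ0 hγ1, Pi.sub_apply]
  linarith

theorem iInf_le_greedyCplx (hP : IsKernel P) (hγ0 : 0 ≤ γ) (hγ1 : γ < 1) {ν : S → ℝ}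
    (hν : 0 ≤ ν) (hPol : ∀ ρ ∈ Pol, IsPolicy ρ) {ρ : S → A → ℝ} (hρ : ρ ∈ Pol) :
    ⨅ ρ' : Pol, occ P γ ν ρ ⬝ᵥ
        (optBellman P r γ (valueFn P r γ ρ) - bellman P r γ ρ' (valueFn P r γ ρ))
      ≤ greedyCplx P r γ ν Pol := by
  refine le_ciSup_of_le ⟨(‖r‖ + 2 * (‖r‖ / (1 - γ))) * ∑ s, ν s,
    Set.forall_mem_range.2 fun σ => ?_⟩ (⟨ρ, hρ⟩ : Pol) le_rfl
  have hσ := hPol σ σ.2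
  have hbdd : 0 ∈ lowerBounds (Set.range fun ρ' : Pol => occ P γ ν σ ⬝ᵥ
      (optBellman P r γ (valueFn P r γ σ) - bellman P r γ ρ' (valueFn P r γ σ))) :=
    Set.forall_mem_range.2 fun ρ' => occ_dotProduct_nonneg hP hσ hγ0 hγ1 hν
      (sub_nonneg.2 (bellman_le_optBellman (hPol ρ' ρ'.2) _))
  exact (ciInf_le ⟨0, hbdd⟩ σ).trans
    (occ_dotProduct_le hP hσ hγ0 hγ1 hν (optBellman_sub_bellman_valueFn_le hP hγ0 hγ1 hσ))

end Greedy

theorem stmt_7_general {S A : Type*} [Fintype S] [Fintype A] [Nonempty A] [DecidableEq S]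
    (P : S → A → S → ℝ) (hP : IsKernel P) (r : S → A → ℝ) (γ : ℝ)
    (hγ0 : 0 ≤ γ) (hγ1 : γ < 1)
    (Pol : Set (S → A → ℝ)) (hPol : ∀ ρ ∈ Pol, IsPolicy ρ)
    (ν : S → ℝ) (hνpos : ∀ s, 0 < ν s)
    (hrich : greedyCplx P r γ ν Pol = 0)
    (π : S → A → ℝ) (hπ : π ∈ Pol)
    (hloc : IsLocalOpt P r γ ν Pol π 0)
    (vstar : S → ℝ) (hvstar : vstar = optBellman P r γ vstar) :
    valueFn P r γ π = vstar := by
  have hπpol := hPol π hπ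
  set v := valueFn P r γ π
  have hgrad : ∀ π' ∈ Pol, occ P γ ν π ⬝ᵥ (bellman P r γ π' v - v) ≤ 0 := fun π' hπ' => by
    obtain ⟨L, hL, hlim⟩ := hloc π' hπ'
    have hL' := tendsto_nhds_unique hlim
      (tendsto_slope_dotProduct_valueFn_mix hP hγ0 hγ1 hπpol (hPol π' hπ') ν)
    rw [occ_dotProduct, ← hL']
    exact mul_nonpos_of_nonneg_of_nonpos (by linarith) hL
  have hinf := (iInf_le_greedyCplx hP hγ0 hγ1 (fun s => (hνpos s).le) hPol hπ).trans hrich.le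
  have hfix : optBellman P r γ v - v = 0 :=
    eq_zero_of_occ_dotProduct_nonpos hP hγ0 hγ1 hπpol hνpos
      (sub_nonneg.2 ((bellman_valueFn hP hπpol hγ0 hγ1).symm.trans_le
        (bellman_le_optBellman hπpol v)))
      (dotProduct_optBellman_sub_nonpos ⟨π, hπ⟩ hinf hgrad)
  exact (contractingWith_optBellman hP hγ0 hγ1).fixedPoint_unique' (sub_eq_zero.1 hfix)
    hvstar.symm

/-- if `ν > 0`, the policy space is rich (`E_ν(Π) = 0`) and `π` is an exact
local optimum of `J_ν` over the convex set `Π`, then `v_π = v_*`. -/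
theorem stmt_7 {S A : Type*} [Fintype S] [Fintype A] [Nonempty S] [Nonempty A] [DecidableEq S]
    (P : S → A → S → ℝ) (hP : IsKernel P) (r : S → A → ℝ) (γ : ℝ)
    (hγ0 : 0 ≤ γ) (hγ1 : γ < 1)
    (Pol : Set (S → A → ℝ)) (hPol : ∀ ρ ∈ Pol, IsPolicy ρ)
    (hconv : ∀ ρ ∈ Pol, ∀ ρ' ∈ Pol, ∀ α : ℝ, 0 ≤ α → α ≤ 1 → mix α ρ ρ' ∈ Pol)
    (ν : S → ℝ) (hν : IsDist ν) (hνpos : ∀ s, 0 < ν s)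
    (hrich : greedyCplx P r γ ν Pol = 0)
    (π : S → A → ℝ) (hπ : π ∈ Pol)
    (hloc : IsLocalOpt P r γ ν Pol π 0)
    (vstar : S → ℝ) (hvstar : vstar = optBellman P r γ vstar) :
    valueFn P r γ π = vstar :=
  stmt_7_general P hP r γ hγ0 hγ1 Pol hPol ν hνpos hrich π hπ hloc vstar hvstar
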